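/- arXiv:2605.07667 — 5 statements merged into one kernel-verified Lean document; each statement's English description precedes it below -/
import Mathlib

section
/- Let Ω be a weight system and (n_a)_{a∈ℕ} a sequence of positive integers. Assume (i) sup_{a∈ℕ} Σ_{k=0}^{|n_a|} |ε_{k−1}(n_a) − ε_k(n_a)|·Ω_k(n_a) < ∞ (with the convention ε_{−1}(n) = 0) and (ii) sup_{a∈ℕ} Ω_{|n_a|}(n_a) < ∞. Then the maximal operator W_C(Ω,{n_a}) is of weak type (1,1): there exists C < ∞ such that λ·|{x ∈ [0,1) : W_C(Ω,{n_a})f(x) > λ}| ≤ C·‖f‖_{L¹} for every f ∈ L¹([0,1)) and every λ > 0. -/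
open MeasureTheory Filter

noncomputable section

/-- the `j`-th binary digit of `x ∈ [0,1)` -/
def dig (j : ℕ) (x : ℝ) : ℕ := ⌊x * 2 ^ (j + 1)⌋.toNat % 2

/-- Rademacher function `r_j` -/
def rade (j : ℕ) (x : ℝ) : ℝ := (-1 : ℝ) ^ dig j x

/-- Walsh–Paley function `w_n` -/
def walsh (n : ℕ) (x : ℝ) : ℝ :=
  ∏ j ∈ Finset.range n, if n.testBit j then rade j x else 1

/-- conditional expectation `E_k` with respect to the `k`-th dyadic σ-algebra -/
def dyadicE (k : ℕ) (f : ℝ → ℝ) (x : ℝ) : ℝ :=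
  2 ^ k * ∫ t in Set.Ico ((⌊x * 2 ^ k⌋ : ℝ) / 2 ^ k) ((⌊x * 2 ^ k⌋ + 1 : ℝ) / 2 ^ k), f t

/-- dyadic martingale difference `𝔈_k f = E_{k+1} f - E_k f` -/
def mdiff (k : ℕ) (f : ℝ → ℝ) (x : ℝ) : ℝ := dyadicE (k + 1) f x - dyadicE k f x

/-- binary digit `ε_k(n)`, as a real number -/
def eps (k : ℕ) (n : ℕ) : ℝ := if n.testBit k then 1 else 0

/-- the martingale transform `M_n(Ω) f = ∑_{k=0}^{|n|} ε_k(n) Ω_k(n) 𝔈_k(f w_n)`,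
where `|n| = Nat.log2 n` is the top binary digit of `n ≥ 1`. -/
def Mn (Ω : ℕ → ℕ → ℝ) (n : ℕ) (f : ℝ → ℝ) (x : ℝ) : ℝ :=
  ∑ k ∈ Finset.range (Nat.log2 n + 1),
    eps k n * Ω k n * mdiff k (fun t => f t * walsh n t) x

/-- a weight system: a family of positive reals, nondecreasing in `k` -/
def IsWeightSystem (Ω : ℕ → ℕ → ℝ) : Prop :=
  (∀ k n, 1 ≤ n → 0 < Ω k n) ∧ (∀ k n, 1 ≤ n → Ω k n ≤ Ω (k + 1) n)

namespace WCAux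
def D (k j : ℕ) : Set ℝ := Set.Ico ((j:ℝ)/2^k) (((j:ℝ)+1)/2^k)

lemma two_pow_pos (k : ℕ) : (0:ℝ) < 2^k := by positivity

lemma mem_D_iff {k j : ℕ} {x : ℝ} : x ∈ D k j ↔ (j:ℝ) ≤ x * 2^k ∧ x * 2^k < (j:ℝ)+1 := by
  unfold D
  rw [Set.mem_Ico, div_le_iff₀ (two_pow_pos k), lt_div_iff₀ (two_pow_pos k)]

lemma mem_D_nonneg {k j : ℕ} {x : ℝ} (h : x ∈ D k j) : 0 ≤ x := by
  have h1 := h.1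
  have : (0:ℝ) ≤ (j:ℝ)/2^k := by positivity
  exact le_trans this h1

lemma floor_mem_D {k : ℕ} {x : ℝ} (hx : 0 ≤ x) : x ∈ D k (⌊x * 2^k⌋.toNat) := by
  have h0 : (0:ℝ) ≤ x * 2^k := by positivity
  have h1 : (0:ℤ) ≤ ⌊x * 2^k⌋ := Int.floor_nonneg.2 h0
  have hc : ((⌊x * 2^k⌋.toNat : ℕ) : ℝ) = ((⌊x * 2^k⌋ : ℤ) : ℝ) := by
    exact_mod_cast congrArg (Int.cast : ℤ → ℝ) (Int.toNat_of_nonneg h1)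
  rw [mem_D_iff, hc]
  exact ⟨Int.floor_le _, Int.lt_floor_add_one _⟩

lemma mem_D_floor_eq {k j : ℕ} {x : ℝ} (h : x ∈ D k j) : ⌊x * 2^k⌋.toNat = j := by
  rw [mem_D_iff] at h
  have : ⌊x * 2^k⌋ = (j:ℤ) := by
    rw [Int.floor_eq_iff]
    · exact ⟨by exact_mod_cast h.1, by push_cast; exact h.2⟩
  rw [this]; exact Int.toNat_natCast j

lemma D_disjoint {k j j' : ℕ} (h : j ≠ j') : Disjoint (D k j) (D k j') :=
  Set.disjoint_left.2 fun x hx hx' => h ((mem_D_floor_eq hx).symm.trans (mem_D_floor_eq hx'))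

lemma D_subset_parent {k k' : ℕ} (j : ℕ) (h : k' ≤ k) : D k j ⊆ D k' (j / 2^(k-k')) := by
  intro x hx
  rw [mem_D_iff] at hx ⊢
  set m := 2^(k-k') with hm
  have hmpos : 0 < m := Nat.pow_pos (by norm_num)
  have hM : (0:ℝ) < (m:ℝ) := by exact_mod_cast hmpos
  have key : (2:ℝ)^k = 2^k' * (m:ℝ) := by
    rw [hm]; push_cast; rw [← pow_add]; congr 1; omega
  have hq1 : ((j/m : ℕ):ℝ) * m ≤ (j:ℝ) := by exact_mod_cast Nat.div_mul_le_self j m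
  have hq2 : (j:ℝ) + 1 ≤ (((j/m : ℕ):ℝ) + 1) * m := by
    have h1 := Nat.div_add_mod j m
    have h2 := Nat.mod_lt j hmpos
    have : j + 1 ≤ (j/m + 1) * m := by nlinarith [h1, h2]
    exact_mod_cast this
  constructor
  · rw [← mul_le_mul_iff_of_pos_right hM]
    calc ((j/m : ℕ):ℝ) * m ≤ (j:ℝ) := hq1
      _ ≤ x * 2^k := hx.1
      _ = x * 2^k' * m := by rw [key]; ring
  · rw [← mul_lt_mul_iff_of_pos_right hM]
    calc x * 2^k' * m = x * 2^k := by rw [key]; ring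
      _ < (j:ℝ) + 1 := hx.2
      _ ≤ (((j/m : ℕ):ℝ) + 1) * m := hq2

lemma D_subset_unit {k j : ℕ} (h : j < 2^k) : D k j ⊆ Set.Ico (0:ℝ) 1 := by
  unfold D
  apply Set.Ico_subset_Ico
  · positivity
  · rw [div_le_one (two_pow_pos k)]
    have : (j:ℝ) + 1 ≤ ((2^k : ℕ) : ℝ) := by exact_mod_cast h
    push_cast at this ⊢
    linarith

lemma volume_D (k j : ℕ) : volume (D k j) = ENNReal.ofReal (1/2^k) := by
  unfold D
  rw [Real.volume_Ico]
  congr 1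
  ring

lemma abs_walsh (n : ℕ) (x : ℝ) : |walsh n x| = 1 := by
  unfold walsh
  rw [Finset.abs_prod]
  apply Finset.prod_eq_one
  intro j _
  by_cases h : n.testBit j <;> simp [h, rade, abs_pow]

lemma abs_dyadicE_le (f w : ℝ → ℝ) (hw : ∀ t, |w t| = 1) (k : ℕ) (x : ℝ) (hx : 0 ≤ x) :
    |dyadicE k (fun t => f t * w t) x| ≤ 2^k * ∫ t in D k (⌊x * 2^k⌋.toNat), |f t| := by
  have h0 : (0:ℝ) ≤ x * 2^k := by positivity
  have h1 : (0:ℤ) ≤ ⌊x * 2^k⌋ := Int.floor_nonneg.2 h0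
  have hc : ((⌊x * 2^k⌋.toNat : ℕ) : ℝ) = ((⌊x * 2^k⌋ : ℤ) : ℝ) := by
    exact_mod_cast congrArg (Int.cast : ℤ → ℝ) (Int.toNat_of_nonneg h1)
  have hD : D k (⌊x * 2^k⌋.toNat)
      = Set.Ico ((⌊x * 2^k⌋ : ℝ) / 2^k) ((⌊x * 2^k⌋ + 1 : ℝ) / 2^k) := by
    unfold D; rw [hc]
  unfold dyadicE
  rw [hD, abs_mul, abs_of_nonneg (two_pow_pos k).le]
  apply mul_le_mul_of_nonneg_left _ (two_pow_pos k).le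
  have heq : (fun t => ‖f t * w t‖) = fun t => |f t| := by
    funext t; rw [Real.norm_eq_abs, abs_mul, hw, mul_one]
  calc |∫ t in Set.Ico ((⌊x * 2^k⌋ : ℝ) / 2^k) ((⌊x * 2^k⌋ + 1 : ℝ) / 2^k), f t * w t|
      ≤ ∫ t in Set.Ico ((⌊x * 2^k⌋ : ℝ) / 2^k) ((⌊x * 2^k⌋ + 1 : ℝ) / 2^k), ‖f t * w t‖ := by
        rw [← Real.norm_eq_abs]; exact norm_integral_le_integral_norm _
    _ = ∫ t in Set.Ico ((⌊x * 2^k⌋ : ℝ) / 2^k) ((⌊x * 2^k⌋ + 1 : ℝ) / 2^k), |f t| := by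
        rw [heq]

lemma abel_identity (c d : ℕ → ℝ) (N : ℕ) :
    ∑ k ∈ Finset.range (N+1), c k * (d (k+1) - d k)
      = c N * d (N+1) - ∑ k ∈ Finset.range (N+1),
          (c k - (if k = 0 then 0 else c (k-1))) * d k := by
  induction N with
  | zero => rw [Finset.sum_range_one, Finset.sum_range_one]; norm_num; ring
  | succ N ih =>
    rw [Finset.sum_range_succ, ih]
    conv_rhs => rw [Finset.sum_range_succ]
    have h1 : (if N + 1 = 0 then (0:ℝ) else c (N+1-1)) = c N := by norm_num
    rw [h1]
    ring

lemma abel_bound (c d : ℕ → ℝ) (N : ℕ) (T K : ℝ)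
    (hT : ∀ k, |d k| ≤ T)
    (hK : |c N| + ∑ k ∈ Finset.range (N+1), |c k - (if k = 0 then 0 else c (k-1))| ≤ K) :
    |∑ k ∈ Finset.range (N+1), c k * (d (k+1) - d k)| ≤ K * T := by
  have hT0 : 0 ≤ T := le_trans (abs_nonneg _) (hT 0)
  rw [abel_identity]
  have h1 : |c N * d (N+1) - ∑ k ∈ Finset.range (N+1),
      (c k - (if k = 0 then 0 else c (k-1))) * d k|
      ≤ |c N * d (N+1)| + |∑ k ∈ Finset.range (N+1),
      (c k - (if k = 0 then 0 else c (k-1))) * d k| := abs_sub _ _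
  refine le_trans h1 ?_
  have h2 : |c N * d (N+1)| ≤ |c N| * T := by
    rw [abs_mul]; exact mul_le_mul_of_nonneg_left (hT _) (abs_nonneg _)
  have h3 : |∑ k ∈ Finset.range (N+1), (c k - (if k = 0 then 0 else c (k-1))) * d k|
      ≤ (∑ k ∈ Finset.range (N+1), |c k - (if k = 0 then 0 else c (k-1))|) * T := by
    refine le_trans (Finset.abs_sum_le_sum_abs _ _) ?_
    rw [Finset.sum_mul]
    refine Finset.sum_le_sum fun k _ => ?_
    rw [abs_mul]
    exact mul_le_mul_of_nonneg_left (hT _) (abs_nonneg _)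
  calc |c N * d (N+1)| + |∑ k ∈ Finset.range (N+1),
        (c k - (if k = 0 then 0 else c (k-1))) * d k|
      ≤ |c N| * T + (∑ k ∈ Finset.range (N+1), |c k - (if k = 0 then 0 else c (k-1))|) * T :=
        add_le_add h2 h3
    _ = (|c N| + ∑ k ∈ Finset.range (N+1), |c k - (if k = 0 then 0 else c (k-1))|) * T := by ring
    _ ≤ K * T := mul_le_mul_of_nonneg_right hK hT0

lemma cover (F : ℝ → ℝ) (hF : IntegrableOn F (Set.Ico 0 1))
    (hF0 : ∀ t, 0 ≤ F t) (lam : ℝ) (hlam : 0 < lam) :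
    ENNReal.ofReal lam *
      volume {x ∈ Set.Ico (0:ℝ) 1 | ∃ k : ℕ, lam < 2^k * ∫ t in D k (⌊x * 2^k⌋.toNat), F t} ≤
    ENNReal.ofReal (∫ t in Set.Ico (0:ℝ) 1, F t) := by
  classical
  set S := {x ∈ Set.Ico (0:ℝ) 1 | ∃ k : ℕ, lam < 2^k * ∫ t in D k (⌊x * 2^k⌋.toNat), F t} with hSdef
  set bad : ℕ × ℕ → Prop := fun p => p.2 < 2^p.1 ∧ lam < 2^p.1 * ∫ t in D p.1 p.2, F t with hbaddef
  set sel : Set (ℕ × ℕ) :=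
    {p | bad p ∧ ∀ q : ℕ × ℕ, q.1 < p.1 → D p.1 p.2 ⊆ D q.1 q.2 → ¬ bad q} with hseldef
  -- coverage
  have hcover : S ⊆ ⋃ p : sel, D p.1.1 p.1.2 := by
    rintro x ⟨hx01, hk⟩
    have hx0 : (0:ℝ) ≤ x := hx01.1
    have hx1 : x < 1 := hx01.2
    have hP : ∃ k : ℕ, bad (k, ⌊x * 2^k⌋.toNat) := by
      obtain ⟨k, hk⟩ := hk
      refine ⟨k, ?_, hk⟩
      have hxl : x * 2^k < 2^k := by nlinarith [two_pow_pos k]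
      have h2 : ⌊x * 2^k⌋ < ((2^k : ℕ) : ℤ) := Int.floor_lt.2 (by push_cast; exact hxl)
      show ⌊x * 2^k⌋.toNat < 2^k
      exact (Int.toNat_lt' (by positivity)).2 h2
    set k0 := Nat.find hP with hk0
    have hbad0 := Nat.find_spec hP
    refine Set.mem_iUnion.2 ⟨⟨(k0, ⌊x * 2^k0⌋.toNat), ?_⟩, floor_mem_D hx0⟩
    refine ⟨hbad0, ?_⟩
    rintro ⟨k', j'⟩ hlt hsub hbadq
    have hxq : x ∈ D k' j' := hsub (floor_mem_D hx0)
    have hj' : ⌊x * 2^k'⌋.toNat = j' := mem_D_floor_eq hxq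
    have := Nat.find_min hP hlt
    rw [hj'] at this
    exact this hbadq
  -- disjointness
  have hdisjkey : ∀ p ∈ sel, ∀ q ∈ sel, q.1 ≤ p.1 → p ≠ q →
      Disjoint (D p.1 p.2) (D q.1 q.2) := by
    rintro ⟨k, j⟩ hp ⟨k', j'⟩ hq hle hne
    rcases eq_or_lt_of_le hle with heq | hlt
    · simp only at heq
      subst heq
      exact D_disjoint (fun hjj => hne (congrArg (Prod.mk k') hjj))
    · by_contra hnd
      obtain ⟨x, hx1, hx2⟩ := Set.not_disjoint_iff.1 hnd
      have hsub := D_subset_parent (k := k) (k' := k') j (le_of_lt hlt)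
      have hx3 : x ∈ D k' (j / 2^(k - k')) := hsub hx1
      have hjj : j / 2^(k - k') = j' := (mem_D_floor_eq hx3).symm.trans (mem_D_floor_eq hx2)
      rw [hjj] at hsub
      exact hp.2 (k', j') hlt hsub hq.1
  have hdisj : Pairwise (Function.onFun Disjoint (fun p : sel => D p.1.1 p.1.2)) := by
    rintro ⟨p, hp⟩ ⟨q, hq⟩ hne
    have hne' : p ≠ q := fun h => hne (Subtype.ext h)
    rcases le_total q.1 p.1 with h | h
    · exact hdisjkey p hp q hq h hne'
    · exact (hdisjkey q hq p hp h hne'.symm).symm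
  have hmsets : ∀ p : sel, MeasurableSet (D p.1.1 p.1.2) := fun p => measurableSet_Ico
  -- each selected interval is estimated
  have perP : ∀ p : sel, ENNReal.ofReal lam * volume (D p.1.1 p.1.2) ≤
      ∫⁻ t in D p.1.1 p.1.2, ENNReal.ofReal (F t) := by
    rintro ⟨⟨k, j⟩, hp⟩
    have hb := hp.1
    rw [volume_D, ← ENNReal.ofReal_mul hlam.le]
    have h1 : lam * (1/2^k) ≤ ∫ t in D k j, F t := by
      have h2 := hb.2
      rw [mul_one_div, div_le_iff₀ (two_pow_pos k)]
      nlinarith [h2]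
    calc ENNReal.ofReal (lam * (1/2^k)) ≤ ENNReal.ofReal (∫ t in D k j, F t) :=
          ENNReal.ofReal_le_ofReal h1
      _ = ∫⁻ t in D k j, ENNReal.ofReal (F t) :=
          ofReal_integral_eq_lintegral_ofReal (hF.mono_set (D_subset_unit hb.1))
            (Filter.Eventually.of_forall fun t => hF0 t)
  have hUsub : (⋃ p : sel, D p.1.1 p.1.2) ⊆ Set.Ico (0:ℝ) 1 := by
    rintro x hx
    obtain ⟨p, hp⟩ := Set.mem_iUnion.1 hx
    exact D_subset_unit p.2.1.1 hp
  calc ENNReal.ofReal lam * volume S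
      ≤ ENNReal.ofReal lam * ∑' p : sel, volume (D p.1.1 p.1.2) :=
        mul_le_mul_right (le_trans (measure_mono hcover) (measure_iUnion_le _)) _
    _ = ∑' p : sel, ENNReal.ofReal lam * volume (D p.1.1 p.1.2) := ENNReal.tsum_mul_left.symm
    _ ≤ ∑' p : sel, ∫⁻ t in D p.1.1 p.1.2, ENNReal.ofReal (F t) := ENNReal.tsum_le_tsum perP
    _ = ∫⁻ t in ⋃ p : sel, D p.1.1 p.1.2, ENNReal.ofReal (F t) := by
        rw [Measure.restrict_iUnion hdisj hmsets, lintegral_sum_measure]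
    _ ≤ ∫⁻ t in Set.Ico (0:ℝ) 1, ENNReal.ofReal (F t) :=
        lintegral_mono' (Measure.restrict_mono hUsub le_rfl) le_rfl
    _ = ENNReal.ofReal (∫ t in Set.Ico (0:ℝ) 1, F t) :=
        (ofReal_integral_eq_lintegral_ofReal hF (Filter.Eventually.of_forall fun t => hF0 t)).symm

lemma coef_bound (Ω : ℕ → ℕ → ℝ) (hΩ : IsWeightSystem Ω) (n : ℕ) (hn1 : 1 ≤ n) (N : ℕ)
    (Bv Bt : ℝ)
    (hv : ∑ k ∈ Finset.range (N+1), |(if k = 0 then 0 else eps (k-1) n) - eps k n| * Ω k n ≤ Bv)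
    (ht : Ω N n ≤ Bt) :
    |eps N n * Ω N n| + ∑ k ∈ Finset.range (N+1),
      |eps k n * Ω k n - (if k = 0 then 0 else eps (k-1) n * Ω (k-1) n)| ≤ Bv + 2*Bt := by
  have hpos : ∀ k, 0 < Ω k n := fun k => hΩ.1 k n hn1
  have hterm : ∀ k, |eps k n * Ω k n - (if k = 0 then 0 else eps (k-1) n * Ω (k-1) n)|
      ≤ |(if k = 0 then 0 else eps (k-1) n) - eps k n| * Ω k n
        + (if k = 0 then 0 else Ω k n - Ω (k-1) n) := by
    intro k
    rcases Nat.eq_zero_or_pos k with hk0 | hkpos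
    · subst hk0
      simp only [if_pos rfl]
      by_cases h : n.testBit 0
      · simp only [eps, h, Bool.false_eq_true, if_true, if_false, one_mul, sub_zero,
          zero_sub, abs_neg, abs_one, add_zero]
        rw [abs_of_nonneg (hpos 0).le]
      · simp only [eps, h, Bool.false_eq_true, if_true, if_false, zero_mul, sub_zero,
          abs_zero, zero_sub, abs_neg, add_zero, neg_zero, zero_add]
        positivity
    · have hkne : k ≠ 0 := Nat.pos_iff_ne_zero.1 hkpos
      have hk1 : k - 1 + 1 = k := Nat.succ_pred_eq_of_pos hkpos
      have hm : Ω (k-1) n ≤ Ω k n := by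
        have := hΩ.2 (k-1) n hn1; rwa [hk1] at this
      rw [if_neg hkne, if_neg hkne, if_neg hkne]
      by_cases h1 : n.testBit k <;> by_cases h2 : n.testBit (k-1) <;>
        simp only [eps, h1, h2, Bool.false_eq_true, if_true, if_false]
      · rw [one_mul, one_mul, sub_self, abs_zero, zero_mul, zero_add,
          abs_of_nonneg (sub_nonneg.2 hm)]
      · rw [one_mul, zero_mul, sub_zero, zero_sub, abs_neg, abs_one, one_mul,
          abs_of_nonneg (hpos k).le]
        linarith [hpos (k-1)]
      · rw [zero_mul, one_mul, zero_sub, abs_neg, sub_zero, abs_one, one_mul,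
          abs_of_nonneg (hpos (k-1)).le]
        linarith
      · simp
        linarith
  have htel : ∑ k ∈ Finset.range (N+1), (if k = 0 then (0:ℝ) else Ω k n - Ω (k-1) n)
      = Ω N n - Ω 0 n := by
    rw [Finset.sum_range_succ']
    have e1 : ∀ i ∈ Finset.range N,
        (if i+1 = 0 then (0:ℝ) else Ω (i+1) n - Ω (i+1-1) n) = Ω (i+1) n - Ω i n :=
      fun i _ => by norm_num
    rw [Finset.sum_congr rfl e1, Finset.sum_range_sub (fun i => Ω i n)]
    simp
  have hN : |eps N n * Ω N n| ≤ Ω N n := by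
    by_cases h : n.testBit N
    · simp only [eps, h, if_true, one_mul]; rw [abs_of_nonneg (hpos N).le]
    · simp only [eps, h, Bool.false_eq_true, if_false, zero_mul, abs_zero]; exact (hpos N).le
  calc |eps N n * Ω N n| + ∑ k ∈ Finset.range (N+1),
        |eps k n * Ω k n - (if k = 0 then 0 else eps (k-1) n * Ω (k-1) n)|
      ≤ Ω N n + ∑ k ∈ Finset.range (N+1),
        (|(if k = 0 then 0 else eps (k-1) n) - eps k n| * Ω k n
          + (if k = 0 then 0 else Ω k n - Ω (k-1) n)) :=
        add_le_add hN (Finset.sum_le_sum fun k _ => hterm k)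
    _ = Ω N n + (∑ k ∈ Finset.range (N+1),
          |(if k = 0 then 0 else eps (k-1) n) - eps k n| * Ω k n)
        + ∑ k ∈ Finset.range (N+1), (if k = 0 then (0:ℝ) else Ω k n - Ω (k-1) n) := by
        rw [Finset.sum_add_distrib]; ring
    _ ≤ Bt + Bv + (Ω N n - Ω 0 n) := by rw [htel]; exact add_le_add (add_le_add ht hv) le_rfl
    _ ≤ Bv + 2*Bt := by linarith [hpos 0, ht]
end WCAux

/-- Under the uniform dyadic variation condition and the uniform
top-scale bound along the sequence `(n_a)`, the weighted Walsh–Carleson maximal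
operator along `(n_a)` is of weak type (1,1). -/

theorem statement0
    (Ω : ℕ → ℕ → ℝ) (hΩ : IsWeightSystem Ω)
    (nseq : ℕ → ℕ) (hn : ∀ a, 1 ≤ nseq a)
    (hvar : ∃ B : ℝ, ∀ a : ℕ,
      ∑ k ∈ Finset.range (Nat.log2 (nseq a) + 1),
        |(if k = 0 then 0 else eps (k - 1) (nseq a)) - eps k (nseq a)| * Ω k (nseq a) ≤ B)
    (htop : ∃ B : ℝ, ∀ a : ℕ, Ω (Nat.log2 (nseq a)) (nseq a) ≤ B) :
    ∃ C : ℝ, ∀ f : ℝ → ℝ, IntegrableOn f (Set.Ico (0:ℝ) 1) → ∀ lam : ℝ, 0 < lam →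
      ENNReal.ofReal lam *
        volume {x ∈ Set.Ico (0:ℝ) 1 | ∃ a : ℕ, lam < |Mn Ω (nseq a) f x|} ≤
      ENNReal.ofReal (C * ∫ x in Set.Ico (0:ℝ) 1, |f x|) := by
  classical
  obtain ⟨Bv, hBv⟩ := hvar
  obtain ⟨Bt, hBt⟩ := htop
  have hBt0 : 0 < Bt := lt_of_lt_of_le (hΩ.1 (Nat.log2 (nseq 0)) (nseq 0) (hn 0)) (hBt 0)
  have hBv0 : 0 ≤ Bv := by
    refine le_trans (Finset.sum_nonneg fun k _ => ?_) (hBv 0)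
    exact mul_nonneg (abs_nonneg _) (hΩ.1 k (nseq 0) (hn 0)).le
  set K : ℝ := Bv + 2 * Bt with hKdef
  have hK0 : 0 < K := by rw [hKdef]; linarith
  refine ⟨K, ?_⟩
  intro f hf lam hlam
  have hcoef : ∀ a : ℕ,
      |eps (Nat.log2 (nseq a)) (nseq a) * Ω (Nat.log2 (nseq a)) (nseq a)| +
        ∑ k ∈ Finset.range (Nat.log2 (nseq a) + 1),
          |eps k (nseq a) * Ω k (nseq a) -
            (if k = 0 then 0 else eps (k-1) (nseq a) * Ω (k-1) (nseq a))| ≤ K :=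
    fun a => WCAux.coef_bound Ω hΩ (nseq a) (hn a) _ Bv Bt (hBv a) (hBt a)
  have hsub : {x ∈ Set.Ico (0:ℝ) 1 | ∃ a : ℕ, lam < |Mn Ω (nseq a) f x|} ⊆
      {x ∈ Set.Ico (0:ℝ) 1 | ∃ k : ℕ,
        lam / K < 2^k * ∫ t in WCAux.D k (⌊x * 2^k⌋.toNat), |f t|} := by
    rintro x ⟨hx01, a, ha⟩
    refine ⟨hx01, ?_⟩
    by_contra hno
    push_neg at hno
    have hd : ∀ k, |dyadicE k (fun t => f t * walsh (nseq a) t) x| ≤ lam / K := fun k =>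
      le_trans (WCAux.abs_dyadicE_le f (walsh (nseq a)) (WCAux.abs_walsh (nseq a)) k x hx01.1)
        (hno k)
    have hb := WCAux.abel_bound (fun k => eps k (nseq a) * Ω k (nseq a))
      (fun k => dyadicE k (fun t => f t * walsh (nseq a) t) x)
      (Nat.log2 (nseq a)) (lam / K) K hd (by simpa using hcoef a)
    have h2 : |Mn Ω (nseq a) f x| ≤ K * (lam / K) := by
      simp only [Mn, mdiff]
      simpa using hb
    have hKlam : K * (lam / K) = lam := by field_simp
    rw [hKlam] at h2
    exact absurd ha (not_lt.2 h2)
  have hcov := WCAux.cover (fun t => |f t|) hf.abs (fun t => abs_nonneg _)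
    (lam / K) (div_pos hlam hK0)
  have hKlam : K * (lam / K) = lam := by field_simp
  calc ENNReal.ofReal lam * volume {x ∈ Set.Ico (0:ℝ) 1 | ∃ a : ℕ, lam < |Mn Ω (nseq a) f x|}
      ≤ ENNReal.ofReal lam * volume {x ∈ Set.Ico (0:ℝ) 1 | ∃ k : ℕ,
          lam / K < 2^k * ∫ t in WCAux.D k (⌊x * 2^k⌋.toNat), |f t|} :=
        mul_le_mul_right (measure_mono hsub) _
    _ = ENNReal.ofReal K * (ENNReal.ofReal (lam / K) * volume {x ∈ Set.Ico (0:ℝ) 1 | ∃ k : ℕ,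
          lam / K < 2^k * ∫ t in WCAux.D k (⌊x * 2^k⌋.toNat), |f t|}) := by
        rw [← mul_assoc, ← ENNReal.ofReal_mul hK0.le, hKlam]
    _ ≤ ENNReal.ofReal K * ENNReal.ofReal (∫ t in Set.Ico (0:ℝ) 1, |f t|) :=
        mul_le_mul_right hcov _
    _ = ENNReal.ofReal (K * ∫ x in Set.Ico (0:ℝ) 1, |f x|) := (ENNReal.ofReal_mul hK0.le).symm

end
end

section
/- Fix κ ∈ (0,1) and let Ω be a Δ_κ-admissible weight system. Then the following are equivalent: (i) lim_{(k,n)_{Δ_κ}→∞} Ω_k(n)/Ω_{k−1}(n) = 1; (ii) sup_{n≥1} Σ_{k=0}^{|n|} Ω_k(n) = ∞. -/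
open Filter

noncomputable section

/-- the cone `Δ_κ = {(k,n) : n ≥ 1, κ|n| < k ≤ |n|}` -/
def coneKappa (κ : ℝ) (k n : ℕ) : Prop :=
  1 ≤ n ∧ κ * (Nat.log2 n : ℝ) < (k : ℝ) ∧ k ≤ Nat.log2 n

/-- the cone `Δ_ω = {(k,n) : n ≥ 1, |n| - ω_n < k ≤ |n|}` -/
def coneOmega (ω : ℕ → ℕ) (k n : ℕ) : Prop :=
  1 ≤ n ∧ Nat.log2 n < k + ω n ∧ k ≤ Nat.log2 n

/-- condition (M): `ω_n ↗ ∞` and `|n|/ω_n ↗ ∞` -/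
def CondM (ω : ℕ → ℕ) : Prop :=
  (∀ n, 1 ≤ ω n) ∧ Monotone ω ∧ Filter.Tendsto ω Filter.atTop Filter.atTop ∧
  Monotone (fun n => (Nat.log2 n : ℝ) / (ω n : ℝ)) ∧
  Filter.Tendsto (fun n => (Nat.log2 n : ℝ) / (ω n : ℝ)) Filter.atTop Filter.atTop

/-- `lim_{(k,n)_Δ → ∞} a_k(n) = L` -/
def ConeLim (Δ : ℕ → ℕ → Prop) (a : ℕ → ℕ → ℝ) (L : ℝ) : Prop :=
  ∀ ε : ℝ, 0 < ε → ∃ N₀ : ℕ, ∀ k n : ℕ, Δ k n → N₀ ≤ Nat.log2 n → |a k n - L| < ε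

/-- `Δ`-admissibility of a weight system -/
def Admissible (Δ : ℕ → ℕ → Prop) (Ω : ℕ → ℕ → ℝ) : Prop :=
  (∃ L : ℝ, ConeLim Δ (fun k n => Ω k n / Ω (k - 1) n) L) ∧
  (∃ c C : ℝ, 0 < c ∧ c ≤ C ∧ ∀ n, 1 ≤ n → c ≤ Ω (Nat.log2 n) n ∧ Ω (Nat.log2 n) n ≤ C)

private lemma chain_up (f : ℕ → ℝ) (a : ℝ) (ha : 0 ≤ a) (k : ℕ) :
    ∀ d : ℕ, (∀ j, k < j → j ≤ k + d → f j ≤ a * f (j - 1)) → f (k + d) ≤ f k * a ^ d := by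
  intro d
  induction d with
  | zero => intro _; simp
  | succ d ih =>
    intro h
    have h1 : f (k + d + 1) ≤ a * f (k + d) := by
      have := h (k + d + 1) (by omega) (by omega)
      simpa using this
    calc f (k + (d + 1)) = f (k + d + 1) := by ring_nf
      _ ≤ a * f (k + d) := h1
      _ ≤ a * (f k * a ^ d) :=
          mul_le_mul_of_nonneg_left (ih fun j hj1 hj2 => h j hj1 (by omega)) ha
      _ = f k * a ^ (d + 1) := by ring

private lemma chain_down (f : ℕ → ℝ) (a : ℝ) (ha : 0 ≤ a) (k : ℕ) :
    ∀ d : ℕ, (∀ j, k < j → j ≤ k + d → a * f (j - 1) ≤ f j) → f k * a ^ d ≤ f (k + d) := by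
  intro d
  induction d with
  | zero => intro _; simp
  | succ d ih =>
    intro h
    have h1 : a * f (k + d) ≤ f (k + d + 1) := by
      have := h (k + d + 1) (by omega) (by omega)
      simpa using this
    calc f k * a ^ (d + 1) = a * (f k * a ^ d) := by ring
      _ ≤ a * f (k + d) :=
          mul_le_mul_of_nonneg_left (ih fun j hj1 hj2 => h j hj1 (by omega)) ha
      _ ≤ f (k + d + 1) := h1
      _ = f (k + (d + 1)) := by ring_nf

set_option maxHeartbeats 1000000 in
/-- For a `Δ_κ`-admissible weight system, the cone limit of the
ratios being `1` is equivalent to `sup_{n ≥ 1} ∑_{k=0}^{|n|} Ω_k(n) = ∞`. -/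
theorem statement4
    (Ω : ℕ → ℕ → ℝ) (hΩ : IsWeightSystem Ω)
    (κ : ℝ) (hκ0 : 0 < κ) (hκ1 : κ < 1)
    (hadm : Admissible (coneKappa κ) Ω) :
    ConeLim (coneKappa κ) (fun k n => Ω k n / Ω (k - 1) n) 1 ↔
      ∀ M : ℝ, ∃ n : ℕ, 1 ≤ n ∧ M < ∑ k ∈ Finset.range (Nat.log2 n + 1), Ω k n := by
  obtain ⟨hpos, hstep⟩ := hΩ
  have hmono : ∀ n, 1 ≤ n → Monotone fun k => Ω k n := fun n hn =>
    monotone_nat_of_le_succ fun k => hstep k n hn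
  obtain ⟨⟨L, hL⟩, c, C, hc, hcC, hbd⟩ := hadm
  have hC : 0 < C := lt_of_lt_of_le hc hcC
  have hlog2 : ∀ s : ℕ, Nat.log2 (2 ^ s) = s := fun s => by
    rw [Nat.log2_eq_log_two, Nat.log_pow one_lt_two]
  constructor
  · -- (i) → (ii)
    intro h M
    obtain ⟨T₀, hT₀⟩ := exists_nat_gt (2 * M / c)
    set T := T₀ + 1 with hTdef
    have hTpos : (0 : ℝ) < T := by positivity
    set ε : ℝ := (2 : ℝ) ^ ((1 : ℝ) / T) - 1 with hεdef
    have h1 : (1 : ℝ) < (2 : ℝ) ^ ((1 : ℝ) / T) :=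
      (Real.one_lt_rpow_iff_of_pos (by norm_num)).mpr (Or.inl ⟨by norm_num, by positivity⟩)
    have hε0 : 0 < ε := by rw [hεdef]; linarith
    have hpow : (1 + ε) ^ T = 2 := by
      have h1 : (1 : ℝ) + ε = (2 : ℝ) ^ ((1 : ℝ) / T) := by simp [hεdef]
      rw [h1, ← Real.rpow_natCast ((2:ℝ) ^ ((1:ℝ)/T)) T, ← Real.rpow_mul (by norm_num),
        one_div, inv_mul_cancel₀ (ne_of_gt hTpos), Real.rpow_one]
    obtain ⟨N₀, hN₀⟩ := h ε hε0
    obtain ⟨s₁, hs₁⟩ := exists_nat_gt ((T : ℝ) / (1 - κ))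
    set s := max N₀ s₁ with hsdef
    have hκ' : (0 : ℝ) < 1 - κ := by linarith
    have hsT : (T : ℝ) < (1 - κ) * s := by
      have h2 : (s₁ : ℝ) ≤ s := Nat.cast_le.mpr (le_max_right _ _)
      have h3 : (T : ℝ) < (1 - κ) * s₁ := by
        rw [div_lt_iff₀ hκ'] at hs₁; linarith [hs₁]
      nlinarith
    have hTs : T ≤ s := by
      have hs0 : (0 : ℝ) ≤ (s : ℝ) := Nat.cast_nonneg s
      have : (T : ℝ) < s := by nlinarith [mul_nonneg hκ0.le hs0]
      exact_mod_cast this.le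
    set n := 2 ^ s with hndef
    have hn1 : 1 ≤ n := Nat.one_le_two_pow
    have hlog : Nat.log2 n = s := hlog2 s
    have hcast_sub : ((s - T : ℕ) : ℝ) = (s : ℝ) - T := by
      push_cast [Nat.cast_sub hTs]; ring
    have key : ∀ k ∈ Finset.Icc (s - T) s, c / 2 ≤ Ω k n := by
      intro k hk
      rw [Finset.mem_Icc] at hk
      have hks : k ≤ s := hk.2
      have hconek : ∀ j : ℕ, k < j → j ≤ s → κ * (s : ℝ) < j := by
        intro j hj1 hj2
        have hkR : ((s : ℝ) - T) ≤ (k : ℝ) := by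
          rw [← hcast_sub]; exact_mod_cast hk.1
        have hkj : (k : ℝ) ≤ j := by exact_mod_cast hj1.le
        linarith
      have hchain := chain_up (fun j => Ω j n) (1 + ε) (by linarith) k (s - k) ?_
      · have heq : k + (s - k) = s := by omega
        rw [heq] at hchain
        have hpow_le : (1 + ε) ^ (s - k) ≤ 2 := by
          rw [← hpow]
          exact pow_le_pow_right₀ (by linarith) (by omega)
        have hΩs : c ≤ Ω s n := by
          have := (hbd n hn1).1; rwa [hlog] at this
        have hΩk : 0 < Ω k n := hpos k n hn1
        have h4 : Ω k n * (1 + ε) ^ (s - k) ≤ Ω k n * 2 :=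
          mul_le_mul_of_nonneg_left hpow_le hΩk.le
        linarith
      · intro j hj1 hj2
        have hjs : j ≤ s := by omega
        have hcone : coneKappa κ j n := by
          refine ⟨hn1, ?_, ?_⟩
          · rw [hlog]; exact hconek j hj1 hjs
          · rw [hlog]; exact hjs
        have hratio := hN₀ j n hcone (by rw [hlog]; exact le_max_left _ _)
        simp only [abs_lt] at hratio
        have hj1' : 1 ≤ j := by omega
        have hΩj1 : 0 < Ω (j - 1) n := hpos (j - 1) n hn1
        have hr2 : Ω j n / Ω (j - 1) n < 1 + ε := by linarith [hratio.2]
        exact ((div_lt_iff₀ hΩj1).mp hr2).le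
    refine ⟨n, hn1, ?_⟩
    rw [hlog]
    have hsub : Finset.Icc (s - T) s ⊆ Finset.range (s + 1) := by
      intro k hk
      rw [Finset.mem_Icc] at hk; rw [Finset.mem_range]; omega
    have hsum1 : ((T : ℝ) + 1) * (c / 2) ≤ ∑ k ∈ Finset.Icc (s - T) s, Ω k n := by
      have hcard : (Finset.Icc (s - T) s).card = T + 1 := by
        rw [Nat.card_Icc]; omega
      calc ((T : ℝ) + 1) * (c / 2) = (Finset.Icc (s - T) s).card • (c / 2) := by
            rw [hcard]; push_cast; ring
        _ ≤ ∑ k ∈ Finset.Icc (s - T) s, Ω k n := Finset.card_nsmul_le_sum _ _ _ key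
    have hsum2 : ∑ k ∈ Finset.Icc (s - T) s, Ω k n ≤ ∑ k ∈ Finset.range (s + 1), Ω k n :=
      Finset.sum_le_sum_of_subset_of_nonneg hsub fun k _ _ => (hpos k n hn1).le
    have hM : M < ((T : ℝ) + 1) * (c / 2) := by
      rw [div_lt_iff₀ hc] at hT₀
      have hT0T : (T₀ : ℝ) ≤ T := by exact_mod_cast Nat.le_succ T₀
      nlinarith
    linarith
  · -- (ii) → (i)
    intro hsum
    have hL1 : L = 1 := by
      have hLge : 1 ≤ L := by
        by_contra hlt
        push_neg at hlt
        obtain ⟨N₀, hN₀⟩ := hL ((1 - L) / 2) (by linarith)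
        set s := max N₀ 1 with hsdef
        have hs1 : 1 ≤ s := le_max_right _ _
        set n := 2 ^ s with hndef
        have hn1 : 1 ≤ n := Nat.one_le_two_pow
        have hlog : Nat.log2 n = s := hlog2 s
        have hsR : (1 : ℝ) ≤ s := by exact_mod_cast hs1
        have hcone : coneKappa κ s n := by
          refine ⟨hn1, ?_, ?_⟩
          · rw [hlog]; nlinarith
          · rw [hlog]
        have hr := hN₀ s n hcone (by rw [hlog]; exact le_max_left _ _)
        have hr1 : 1 ≤ Ω s n / Ω (s - 1) n :=
          (one_le_div (hpos _ _ hn1)).mpr (hmono n hn1 (Nat.sub_le s 1))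
        rw [abs_lt] at hr
        have := hr.2
        simp only at this
        linarith
      by_contra hne
      have hLgt : 1 < L := lt_of_le_of_ne hLge (Ne.symm hne)
      set ε := (L - 1) / 2 with hεdef
      have hε0 : 0 < ε := by rw [hεdef]; linarith
      obtain ⟨N₀, hN₀⟩ := hL ε hε0
      set r := (1 + ε)⁻¹ with hrdef
      have hε1 : (1 : ℝ) < 1 + ε := by linarith
      have hr0 : 0 < r := by rw [hrdef]; positivity
      have hr1 : r < 1 := by rw [hrdef]; exact inv_lt_one_of_one_lt₀ hε1
      have hκ' : (0 : ℝ) < 1 - κ := by linarith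
      set A : ℝ := 1 / (1 - κ) + 1 with hAdef
      have hA0 : 0 < A := by rw [hAdef]; positivity
      -- the sequence (t+1) * r^t tends to 0
      have hsumm : Summable fun t : ℕ => (t : ℝ) * r ^ t := by
        have hnorm : ‖r‖ < 1 := by rw [Real.norm_eq_abs, abs_of_pos hr0]; exact hr1
        exact (hasSum_coe_mul_geometric_of_norm_lt_one hnorm).summable
      have h2 : Tendsto (fun t : ℕ => (t : ℝ) * r ^ t) atTop (nhds 0) :=
        hsumm.tendsto_atTop_zero
      have h1 : Tendsto (fun t : ℕ => r ^ t) atTop (nhds 0) :=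
        tendsto_pow_atTop_nhds_zero_of_lt_one hr0.le hr1
      have h3 : Tendsto (fun t : ℕ => A * (((t : ℝ) + 1) * r ^ t)) atTop (nhds 0) := by
        have h4 := (h2.add h1).const_mul A
        have he : (fun t : ℕ => A * (((t : ℝ) + 1) * r ^ t)) =
            fun t : ℕ => A * ((t : ℝ) * r ^ t + r ^ t) := by
          funext t; ring
        rw [he]
        simpa using h4
      obtain ⟨T₁, hT₁⟩ := eventually_atTop.mp (h3.eventually_lt_const one_pos)
      obtain ⟨N₂, hN₂⟩ := exists_nat_gt (((T₁ : ℝ) + 1) / (1 - κ))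
      set N₁ := max (max N₀ 1) N₂ with hN₁def
      have hbig : ∀ m : ℕ, 1 ≤ m → N₁ ≤ Nat.log2 m →
          ∑ k ∈ Finset.range (Nat.log2 m + 1), Ω k m ≤ C * (1 - r)⁻¹ + C := by
        intro n hn1 hsN
        set s := Nat.log2 n with hs
        have hsN₀ : N₀ ≤ s := le_trans (le_trans (le_max_left _ _) (le_max_left _ _)) hsN
        have hs1 : 1 ≤ s := le_trans (le_trans (le_max_right _ _) (le_max_left _ _)) hsN
        have hsN₂ : N₂ ≤ s := le_trans (le_max_right _ _) hsN
        have hsR1 : (1 : ℝ) ≤ s := by exact_mod_cast hs1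
        have hratio : ∀ j : ℕ, κ * (s : ℝ) < j → j ≤ s → (1 + ε) * Ω (j - 1) n ≤ Ω j n := by
          intro j hj1 hj2
          have hcone : coneKappa κ j n := by
            refine ⟨hn1, ?_, ?_⟩
            · rw [← hs]; exact hj1
            · rw [← hs]; exact hj2
          have hrr := hN₀ j n hcone (by rw [← hs]; exact hsN₀)
          rw [abs_lt] at hrr
          have hrr1 := hrr.1
          simp only at hrr1
          have hgt : 1 + ε < Ω j n / Ω (j - 1) n := by
            rw [hεdef] at hrr1 ⊢; linarith
          have hΩj1 : 0 < Ω (j - 1) n := hpos _ _ hn1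
          exact ((lt_div_iff₀ hΩj1).mp hgt).le
        set k0 := Nat.floor (κ * (s : ℝ)) + 1 with hk0
        have hκs0 : (0 : ℝ) ≤ κ * s := by positivity
        have hfl : (Nat.floor (κ * (s : ℝ)) : ℝ) ≤ κ * s := Nat.floor_le hκs0
        have hltk0 : κ * (s : ℝ) < k0 := by
          have := Nat.lt_floor_add_one (κ * (s : ℝ))
          rw [hk0]; push_cast; linarith
        have hκss : κ * (s : ℝ) < s := by nlinarith
        have hk0s : k0 ≤ s := by
          have hfloor : Nat.floor (κ * (s : ℝ)) < s := (Nat.floor_lt hκs0).mpr hκss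
          omega
        have hub : ∀ k, k0 ≤ k → k ≤ s → Ω k n ≤ C * r ^ (s - k) := by
          intro k hk1 hk2
          have hchain := chain_down (fun j => Ω j n) (1 + ε) (by linarith) k (s - k) ?_
          · have heq : k + (s - k) = s := by omega
            rw [heq] at hchain
            have hΩs : Ω s n ≤ C := by
              have := (hbd n hn1).2; rwa [← hs] at this
            have hp : (0 : ℝ) < (1 + ε) ^ (s - k) := by positivity
            rw [hrdef, inv_pow, ← div_eq_mul_inv, le_div_iff₀ hp]
            exact le_trans hchain hΩs
          · intro j hj1 hj2
            have hk0j : κ * (s : ℝ) < j := by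
              have : (k0 : ℝ) ≤ j := by exact_mod_cast (by omega : k0 ≤ j)
              linarith
            exact hratio j hk0j (by omega)
        have hsplit : ∑ k ∈ Finset.range (s + 1), Ω k n =
            ∑ k ∈ Finset.range k0, Ω k n + ∑ k ∈ Finset.Icc k0 s, Ω k n := by
          rw [Finset.range_eq_Ico, ← Finset.sum_Ico_consecutive (fun k => Ω k n)
            (Nat.zero_le k0) (by omega : k0 ≤ s + 1), ← Finset.range_eq_Ico,
            Finset.Ico_add_one_right_eq_Icc]
        have hgeom : ∑ k ∈ Finset.Icc k0 s, Ω k n ≤ C * (1 - r)⁻¹ := by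
          have step1 : ∑ k ∈ Finset.Icc k0 s, Ω k n ≤ ∑ k ∈ Finset.Icc k0 s, C * r ^ (s - k) :=
            Finset.sum_le_sum fun k hk => by
              rw [Finset.mem_Icc] at hk; exact hub k hk.1 hk.2
          have step2 : ∑ k ∈ Finset.Icc k0 s, C * r ^ (s - k)
              ≤ ∑ k ∈ Finset.range (s + 1), C * r ^ (s - k) :=
            Finset.sum_le_sum_of_subset_of_nonneg
              (by intro k hk; rw [Finset.mem_Icc] at hk; rw [Finset.mem_range]; omega)
              (fun k _ _ => by positivity)
          have step3 : ∑ k ∈ Finset.range (s + 1), C * r ^ (s - k)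
              = C * ∑ j ∈ Finset.range (s + 1), r ^ j := by
            rw [← Finset.mul_sum]
            congr 1
            have hrefl := Finset.sum_range_reflect (fun j => r ^ j) (s + 1)
            simpa using hrefl
          have step4 : ∑ j ∈ Finset.range (s + 1), r ^ j ≤ (1 - r)⁻¹ := by
            rw [← tsum_geometric_of_lt_one hr0.le hr1]
            exact (summable_geometric_of_lt_one hr0.le hr1).sum_le_tsum _
              (fun i _ => by positivity)
          calc ∑ k ∈ Finset.Icc k0 s, Ω k n
              ≤ ∑ k ∈ Finset.range (s + 1), C * r ^ (s - k) := le_trans step1 step2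
            _ = C * ∑ j ∈ Finset.range (s + 1), r ^ j := step3
            _ ≤ C * (1 - r)⁻¹ := mul_le_mul_of_nonneg_left step4 hC.le
        set u := s - k0 with hu
        have huR : ((1 - κ) * s - 1) ≤ (u : ℝ) := by
          have hcast : ((u : ℕ) : ℝ) = (s : ℝ) - k0 := by
            rw [hu]; push_cast [Nat.cast_sub hk0s]; ring
          have hk0R : (k0 : ℝ) ≤ κ * s + 1 := by rw [hk0]; push_cast; linarith
          rw [hcast]; linarith
        have huT : T₁ ≤ u := by
          have hN₂R : ((T₁ : ℝ) + 1) < (1 - κ) * N₂ := by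
            rw [div_lt_iff₀ hκ'] at hN₂; linarith
          have hsN₂R : (N₂ : ℝ) ≤ s := by exact_mod_cast hsN₂
          have : (T₁ : ℝ) < u := by nlinarith
          exact_mod_cast this.le
        have hlow : ∑ k ∈ Finset.range k0, Ω k n ≤ C := by
          have hmon : ∀ k ∈ Finset.range k0, Ω k n ≤ C * r ^ u := by
            intro k hk
            rw [Finset.mem_range] at hk
            exact le_trans (hmono n hn1 (by omega : k ≤ k0)) (hub k0 le_rfl hk0s)
          have hk0R1 : (k0 : ℝ) ≤ (s : ℝ) + 1 := by
            have h9 : k0 ≤ s + 1 := by omega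
            exact_mod_cast h9
          have hrupos : (0 : ℝ) ≤ C * r ^ u := by positivity
          have hs1A : (s : ℝ) + 1 ≤ A * ((u : ℝ) + 1) := by
            have hdiv : (s : ℝ) ≤ ((u : ℝ) + 1) / (1 - κ) := by
              rw [le_div_iff₀ hκ']; nlinarith
            have hu0 : (0 : ℝ) ≤ u := Nat.cast_nonneg u
            have hA1 : ((u : ℝ) + 1) / (1 - κ) = ((u : ℝ) + 1) * (1 / (1 - κ)) := by ring
            rw [hAdef]
            calc (s : ℝ) + 1 ≤ ((u : ℝ) + 1) / (1 - κ) + 1 := by linarith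
              _ ≤ ((u : ℝ) + 1) * (1 / (1 - κ)) + ((u : ℝ) + 1) := by
                  rw [← hA1]; linarith
              _ = (1 / (1 - κ) + 1) * ((u : ℝ) + 1) := by ring
          have hru : (0 : ℝ) ≤ r ^ u := by positivity
          calc ∑ k ∈ Finset.range k0, Ω k n ≤ ∑ k ∈ Finset.range k0, C * r ^ u :=
                Finset.sum_le_sum hmon
            _ = (k0 : ℝ) * (C * r ^ u) := by
                rw [Finset.sum_const, Finset.card_range, nsmul_eq_mul]
            _ ≤ ((s : ℝ) + 1) * (C * r ^ u) := mul_le_mul_of_nonneg_right hk0R1 hrupos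
            _ = C * (((s : ℝ) + 1) * r ^ u) := by ring
            _ ≤ C * (A * (((u : ℝ) + 1) * r ^ u)) := by
                apply mul_le_mul_of_nonneg_left _ hC.le
                have := mul_le_mul_of_nonneg_right hs1A hru
                calc ((s : ℝ) + 1) * r ^ u ≤ A * ((u : ℝ) + 1) * r ^ u := this
                  _ = A * (((u : ℝ) + 1) * r ^ u) := by ring
            _ ≤ C * 1 := mul_le_mul_of_nonneg_left (hT₁ u huT).le hC.le
            _ = C := mul_one C
        rw [hsplit]
        linarith
      -- derive contradiction with unboundedness
      set M := C * (1 - r)⁻¹ + C +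
        ∑ m ∈ Finset.range (2 ^ N₁), |∑ k ∈ Finset.range (Nat.log2 m + 1), Ω k m| with hMdef
      obtain ⟨n, hn1, hgt⟩ := hsum M
      have habs : 0 ≤ ∑ m ∈ Finset.range (2 ^ N₁),
          |∑ k ∈ Finset.range (Nat.log2 m + 1), Ω k m| :=
        Finset.sum_nonneg fun m _ => abs_nonneg _
      have hrpos : (0 : ℝ) < (1 - r)⁻¹ := by
        have : (0 : ℝ) < 1 - r := by linarith
        positivity
      by_cases hcase : N₁ ≤ Nat.log2 n
      · have hb := hbig n hn1 hcase
        rw [hMdef] at hgt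
        linarith
      · push_neg at hcase
        have hnlt : n < 2 ^ N₁ := by
          have h0 : n ≠ 0 := by omega
          rw [Nat.log2_eq_log_two] at hcase
          exact (Nat.log_lt_iff_lt_pow one_lt_two h0).mp hcase
        have hmem : n ∈ Finset.range (2 ^ N₁) := Finset.mem_range.mpr hnlt
        have hsingle := Finset.single_le_sum
          (f := fun m => |∑ k ∈ Finset.range (Nat.log2 m + 1), Ω k m|)
          (fun m _ => abs_nonneg _) hmem
        have habs2 : ∑ k ∈ Finset.range (Nat.log2 n + 1), Ω k n
            ≤ |∑ k ∈ Finset.range (Nat.log2 n + 1), Ω k n| := le_abs_self _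
        rw [hMdef] at hgt
        nlinarith [mul_pos hC hrpos]
    exact hL1 ▸ hL
end
end

section
/- Let ω = (ω_n) be a sequence of positive integers satisfying condition (M), and let Ω be a Δ_ω-admissible weight system. If lim_{(k,n)_{Δ_ω}→∞} Ω_k(n)/Ω_{k−1}(n) = 1, then sup_{n≥1} Σ_{k=0}^{|n|} Ω_k(n) = ∞. -/
open Filter

noncomputable section

/-- For a `Δ_ω`-admissible weight system, if the cone limit of the
ratios is `1`, then `sup_{n ≥ 1} ∑_{k=0}^{|n|} Ω_k(n) = ∞`. -/
theorem statement5
    (Ω : ℕ → ℕ → ℝ) (hΩ : IsWeightSystem Ω)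
    (ω : ℕ → ℕ) (hω : CondM ω)
    (hadm : Admissible (coneOmega ω) Ω)
    (hlim : ConeLim (coneOmega ω) (fun k n => Ω k n / Ω (k - 1) n) 1) :
    ∀ M : ℝ, ∃ n : ℕ, 1 ≤ n ∧ M < ∑ k ∈ Finset.range (Nat.log2 n + 1), Ω k n := by
  obtain ⟨hpos, hmono⟩ := hΩ
  obtain ⟨-, c, C, hc, hcC, hbnd⟩ := hadm
  obtain ⟨hω1, hωmono, hωtop, hratmono, hrattop⟩ := hω
  intro M
  set M' : ℝ := max M 0 + 1 with hM'def
  have hM'pos : 0 < M' := by positivity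
  have hMM' : M < M' := by
    have := le_max_left M 0
    simp only [hM'def]; linarith
  set ε : ℝ := c / (2 * M') with hεdef
  have hεpos : 0 < ε := by positivity
  have hεc : c = ε * (2 * M') := by
    rw [hεdef, div_mul_cancel₀ c (ne_of_gt (by positivity))]
  obtain ⟨N₀, hN₀⟩ := hlim ε hεpos
  obtain ⟨m₀, hm₀⟩ := pow_unbounded_of_one_lt (2 : ℝ) (by linarith : (1:ℝ) < 1 + ε)
  -- choose n
  have E1 : ∀ᶠ n in atTop, m₀ ≤ ω n := hωtop.eventually_ge_atTop m₀
  have E2 : ∀ᶠ n in atTop, (max (N₀ : ℝ) 1) ≤ (Nat.log2 n : ℝ) / (ω n : ℝ) :=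
    hrattop.eventually_ge_atTop _
  obtain ⟨n, hn1, hE1, hE2⟩ := ((eventually_ge_atTop 1).and (E1.and E2)).exists
  set L := Nat.log2 n with hLdef
  set W := ω n with hWdef
  have hWpos : (0 : ℝ) < (W : ℝ) := by
    have := hω1 n; exact_mod_cast Nat.lt_of_lt_of_le Nat.zero_lt_one this
  have hmaxW : (max (N₀ : ℝ) 1) * (W : ℝ) ≤ (L : ℝ) := (le_div_iff₀ hWpos).mp hE2
  have hWL : W ≤ L := by
    have h1 : (W : ℝ) ≤ (max (N₀ : ℝ) 1) * (W : ℝ) := by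
      nlinarith [le_max_right (N₀ : ℝ) 1]
    exact_mod_cast h1.trans hmaxW
  have hN₀L : N₀ ≤ L := by
    have h1 : (N₀ : ℝ) ≤ (max (N₀ : ℝ) 1) * (W : ℝ) := by
      have h2 : (1 : ℝ) ≤ (W : ℝ) := by exact_mod_cast hω1 n
      nlinarith [le_max_left (N₀ : ℝ) 1, le_max_right (N₀ : ℝ) 1]
    exact_mod_cast h1.trans hmaxW
  set r : ℝ := (1 + ε)⁻¹ with hrdef
  have hr0 : 0 < r := by positivity
  have hr1 : r < 1 := by
    rw [hrdef, inv_lt_one_iff₀]; right; linarith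
  have hrε : r * (1 + ε) = 1 := by
    rw [hrdef]; field_simp
  -- key lower bound
  have key : ∀ j, j < W → c * r ^ j ≤ Ω (L - j) n := by
    intro j
    induction j with
    | zero =>
      intro _
      simpa using (hbnd n hn1).1
    | succ j ih =>
      intro hj
      have hj' : j < W := Nat.lt_of_succ_lt hj
      have hjL : j + 1 < L := lt_of_lt_of_le hj hWL
      have hcone : coneOmega ω (L - j) n := ⟨hn1, by omega, by omega⟩
      have hratio := hN₀ (L - j) n hcone hN₀L
      rw [abs_sub_lt_iff] at hratio
      have hk1 : L - j - 1 = L - (j + 1) := by omega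
      have ha : 0 < Ω (L - (j + 1)) n := hpos _ n hn1
      have hb : c * r ^ j ≤ Ω (L - j) n := ih hj'
      have hdiv : Ω (L - j) n / Ω (L - j - 1) n < 1 + ε := by
        have := hratio.1; simp only at this; linarith
      rw [hk1] at hdiv
      have hlt : Ω (L - j) n < (1 + ε) * Ω (L - (j + 1)) n := (div_lt_iff₀ ha).mp hdiv
      have hpw : r ^ (j + 1) = r ^ j * r := pow_succ r j
      rw [hpw]
      nlinarith [mul_le_mul_of_nonneg_right hb hr0.le,
        mul_lt_mul_of_pos_right hlt hr0, pow_pos hr0 j]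
  -- sum manipulations
  have hnonneg : ∀ k, 0 ≤ Ω k n := fun k => (hpos k n hn1).le
  have hsum_reflect : ∑ j ∈ Finset.range (L + 1), Ω (L - j) n
      = ∑ k ∈ Finset.range (L + 1), Ω k n := by
    have h := Finset.sum_range_reflect (fun k => Ω k n) (L + 1)
    rw [← h]
    refine Finset.sum_congr rfl (fun j hj => ?_)
    have : L + 1 - 1 - j = L - j := by omega
    rw [this]
  have hsubset : ∑ j ∈ Finset.range W, Ω (L - j) n
      ≤ ∑ j ∈ Finset.range (L + 1), Ω (L - j) n :=
    Finset.sum_le_sum_of_subset_of_nonneg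
      (Finset.range_subset_range.mpr (by omega)) (fun i _ _ => hnonneg _)
  have hgeomle : ∑ j ∈ Finset.range W, c * r ^ j ≤ ∑ j ∈ Finset.range W, Ω (L - j) n :=
    Finset.sum_le_sum (fun j hj => key j (Finset.mem_range.mp hj))
  -- evaluate geometric sum
  set S : ℝ := ∑ j ∈ Finset.range W, r ^ j with hSdef
  have hcS : ∑ j ∈ Finset.range W, c * r ^ j = c * S := by
    rw [hSdef, Finset.mul_sum]
  have hSnonneg : 0 ≤ S := Finset.sum_nonneg (fun j _ => (pow_pos hr0 j).le)
  have hSmul : S * (1 - r) = 1 - r ^ W := by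
    have h := geom_sum_mul r W
    rw [← hSdef] at h
    linarith
  have hrW : r ^ W ≤ 1 / 2 := by
    have h1 : r ^ W ≤ r ^ m₀ := pow_le_pow_of_le_one hr0.le hr1.le hE1
    have h2 : r ^ m₀ = ((1 + ε) ^ m₀)⁻¹ := by rw [hrdef, inv_pow]
    have h3 : (0:ℝ) < (1 + ε) ^ m₀ := by positivity
    have h4 : ((1 + ε) ^ m₀)⁻¹ ≤ (2:ℝ)⁻¹ := (inv_le_inv₀ h3 two_pos).mpr hm₀.le
    rw [h2] at h1
    norm_num at h4 ⊢
    linarith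
  have h1r : 1 - r ≤ ε := by nlinarith
  have hSε : 1 / 2 ≤ S * ε := by
    have h1 : S * (1 - r) ≤ S * ε := mul_le_mul_of_nonneg_left h1r hSnonneg
    linarith [hSmul, hrW]
  clear_value S r ε M'
  have hfinal : M < c * S := by
    have h1 : 2 * M' * (1 / 2) ≤ 2 * M' * (S * ε) :=
      mul_le_mul_of_nonneg_left hSε (by positivity)
    have h2 : c * S = 2 * M' * (S * ε) := by rw [hεc]; ring
    linarith
  refine ⟨n, hn1, ?_⟩
  calc M < c * S := hfinal
    _ = ∑ j ∈ Finset.range W, c * r ^ j := hcS.symm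
    _ ≤ ∑ j ∈ Finset.range W, Ω (L - j) n := hgeomle
    _ ≤ ∑ j ∈ Finset.range (L + 1), Ω (L - j) n := hsubset
    _ = ∑ k ∈ Finset.range (L + 1), Ω k n := hsum_reflect

end
end

section
/- Fix L > 1 and set ω_n := ⌊(1/2)·log_L(|n|+1)⌋. For n with ω_n ≥ 1 define Ω_k(n) := L^{−ω_n} for 0 ≤ k ≤ |n| − ω_n and Ω_k(n) := L^{k−|n|} for |n| − ω_n < k ≤ |n|. Then: (1) for each such n the map k ↦ Ω_k(n) is nondecreasing on 0 ≤ k ≤ |n|; (2) Ω_{|n|}(n) = 1; (3) Ω_k(n)/Ω_{k−1}(n) = L for all (k,n) ∈ Δ_ω with |n| sufficiently large, so lim_{(k,n)_{Δ_ω}→∞} Ω_k(n)/Ω_{k−1}(n) = L > 1; and nevertheless (4) sup_{n≥1} Σ_{k=0}^{|n|} Ω_k(n) = ∞ (indeed Σ_{k=0}^{|n|} Ω_k(n) ≳ (|n|+1)^{1/2}). In particular, the cone condition lim_{(k,n)_{Δ_ω}→∞} Ω_k(n)/Ω_{k−1}(n) = 1 is sufficient but not necessary for sup_{n≥1} Σ_{k=0}^{|n|}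 Ω_k(n) = ∞. -/
open Filter

noncomputable section

/-- For fixed `L > 1` and `ω_n := ⌊(1/2)·log_L(|n|+1)⌋`, the weights
`Ω_k(n) := L^{-ω_n}` for `k ≤ |n| - ω_n` and `Ω_k(n) := L^{k-|n|}` for
`|n| - ω_n < k ≤ |n|` are nondecreasing in `k`, have `Ω_{|n|}(n) = 1`, have cone
ratio limit `L > 1` along `Δ_ω`, and nevertheless `sup_n ∑_{k=0}^{|n|} Ω_k(n) = ∞`
(indeed the row sums dominate `√(|n|+1)`). Hence the cone ratio condition `= 1` is
sufficient but not necessary for the row sums to be unbounded. -/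
theorem statement6 (L : ℝ) (hL : 1 < L)
    (ωf : ℕ → ℕ) (hωf : ∀ n, ωf n = (⌊Real.logb L ((Nat.log2 n : ℝ) + 1) / 2⌋).toNat)
    (Ω : ℕ → ℕ → ℝ)
    (hΩ : ∀ k n, Ω k n = if (k : ℤ) ≤ (Nat.log2 n : ℤ) - (ωf n : ℤ)
        then L ^ (-(ωf n : ℤ)) else L ^ ((k : ℤ) - (Nat.log2 n : ℤ))) :
    (∀ n k : ℕ, 1 ≤ n → 1 ≤ ωf n → 1 ≤ k → k ≤ Nat.log2 n → Ω (k - 1) n ≤ Ω k n) ∧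
    (∀ n : ℕ, 1 ≤ n → 1 ≤ ωf n → Ω (Nat.log2 n) n = 1) ∧
    (∃ N₀ : ℕ, ∀ k n : ℕ, 1 ≤ n → N₀ ≤ Nat.log2 n →
        Nat.log2 n < k + ωf n → k ≤ Nat.log2 n → Ω k n / Ω (k - 1) n = L) ∧
    (∀ ε : ℝ, 0 < ε → ∃ N₀ : ℕ, ∀ k n : ℕ, 1 ≤ n → Nat.log2 n < k + ωf n →
        k ≤ Nat.log2 n → N₀ ≤ Nat.log2 n → |Ω k n / Ω (k - 1) n - L| < ε) ∧
    (∃ c : ℝ, 0 < c ∧ ∀ n : ℕ, 1 ≤ n →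
        c * Real.sqrt ((Nat.log2 n : ℝ) + 1) ≤ ∑ k ∈ Finset.range (Nat.log2 n + 1), Ω k n) ∧
    (∀ M : ℝ, ∃ n : ℕ, 1 ≤ n ∧ M < ∑ k ∈ Finset.range (Nat.log2 n + 1), Ω k n) := by
  have hL0 : (0:ℝ) < L := lt_trans one_pos hL
  have hLne : L ≠ 0 := ne_of_gt hL0
  -- ω is at most (1/2) log_L (m+1)
  have hωle : ∀ n : ℕ, (ωf n : ℝ) ≤ Real.logb L ((Nat.log2 n : ℝ) + 1) / 2 := by
    intro n
    rw [hωf n]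
    set t := Real.logb L ((Nat.log2 n : ℝ) + 1) / 2 with ht
    have ht0 : 0 ≤ t := by
      apply div_nonneg _ (by norm_num)
      refine Real.logb_nonneg hL ?_
      have := Nat.cast_nonneg (α := ℝ) (Nat.log2 n)
      linarith
    have h1 : (⌊t⌋.toNat : ℤ) = ⌊t⌋ := Int.toNat_of_nonneg (Int.floor_nonneg.mpr ht0)
    calc ((⌊t⌋.toNat : ℕ) : ℝ) = ((⌊t⌋ : ℤ) : ℝ) := by exact_mod_cast h1
      _ ≤ t := Int.floor_le t
  -- L ^ ω ≤ √(m+1)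
  have hpow : ∀ n : ℕ, (L : ℝ) ^ (ωf n : ℕ) ≤ Real.sqrt ((Nat.log2 n : ℝ) + 1) := by
    intro n
    set m := (Nat.log2 n : ℝ) with hm
    have h1 : (L:ℝ) ^ (ωf n : ℕ) = L ^ ((ωf n : ℝ)) := (Real.rpow_natCast L (ωf n)).symm
    rw [h1, Real.sqrt_eq_rpow]
    have h2 : L ^ ((ωf n : ℝ)) ≤ L ^ (Real.logb L (m+1) / 2) :=
      Real.rpow_le_rpow_of_exponent_le hL.le (hωle n)
    refine h2.trans_eq ?_
    rw [div_eq_mul_one_div, Real.rpow_mul hL0.le,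
      Real.rpow_logb hL0 hL.ne' (by positivity)]
  -- pointwise lower bound
  have hlow : ∀ k n : ℕ, L ^ (-(ωf n : ℤ)) ≤ Ω k n := by
    intro k n
    rw [hΩ]
    split
    · exact le_refl _
    · next h => exact zpow_le_zpow_right₀ hL.le (by omega)
  -- row sums dominate √(m+1)
  have hsum : ∀ n : ℕ, 1 ≤ n → Real.sqrt ((Nat.log2 n : ℝ) + 1)
      ≤ ∑ k ∈ Finset.range (Nat.log2 n + 1), Ω k n := by
    intro n hn
    set m := Nat.log2 n with hm
    have hmpos : (0:ℝ) < (m:ℝ) + 1 := by positivity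
    have hsq : 0 < Real.sqrt ((m:ℝ)+1) := Real.sqrt_pos.mpr hmpos
    have hterm : ∀ k ∈ Finset.range (m+1), (Real.sqrt ((m:ℝ)+1))⁻¹ ≤ Ω k n := by
      intro k _
      refine le_trans ?_ (hlow k n)
      rw [zpow_neg, zpow_natCast]
      exact inv_anti₀ (pow_pos hL0 _) (hpow n)
    calc Real.sqrt ((m:ℝ)+1)
        = ((m:ℝ)+1) * (Real.sqrt ((m:ℝ)+1))⁻¹ := by
          field_simp
          exact Real.sq_sqrt hmpos.le
      _ = ∑ _k ∈ Finset.range (m+1), (Real.sqrt ((m:ℝ)+1))⁻¹ := by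
          rw [Finset.sum_const, Finset.card_range, nsmul_eq_mul]
          push_cast; ring
      _ ≤ ∑ k ∈ Finset.range (m+1), Ω k n := Finset.sum_le_sum hterm
  -- ratio in the cone equals L
  have hratio : ∀ k n : ℕ, 1 ≤ k → k ≤ Nat.log2 n → Nat.log2 n < k + ωf n →
      Ω k n / Ω (k-1) n = L := by
    intro k n hk1 hkm hcone
    have hc : ((k-1:ℕ):ℤ) = (k:ℤ) - 1 := by omega
    rw [hΩ k n, hΩ (k-1) n, hc]
    have hk : ¬ ((k:ℤ) ≤ (Nat.log2 n:ℤ) - (ωf n:ℤ)) := by omega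
    rw [if_neg hk]
    split
    · next h =>
      rw [← zpow_sub₀ hLne]
      have he : (k:ℤ) - (Nat.log2 n:ℤ) - (-(ωf n:ℤ)) = 1 := by omega
      rw [he, zpow_one]
    · next h =>
      rw [← zpow_sub₀ hLne]
      have he : (k:ℤ) - (Nat.log2 n:ℤ) - ((k:ℤ) - 1 - (Nat.log2 n:ℤ)) = 1 := by ring
      rw [he, zpow_one]
  -- eventually ω ≤ m
  have hN : ∃ N₀ : ℕ, ∀ n : ℕ, N₀ ≤ Nat.log2 n → ωf n ≤ Nat.log2 n := by
    have h := Real.isLittleO_log_id_atTop.def (Real.log_pos hL)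
    rw [Filter.eventually_atTop] at h
    obtain ⟨C, hC⟩ := h
    refine ⟨⌈C⌉₊ + 1, fun n hm => ?_⟩
    set m := Nat.log2 n with hmdef
    have hm1 : 1 ≤ m := by omega
    have hCm : C ≤ (m:ℝ) + 1 := by
      have h1 : C ≤ (⌈C⌉₊ : ℝ) := Nat.le_ceil C
      have h2 : (⌈C⌉₊ : ℝ) ≤ (m:ℝ) := by exact_mod_cast Nat.le_of_succ_le hm
      linarith
    have hlog := hC ((m:ℝ)+1) hCm
    simp only [id] at hlog
    rw [Real.norm_of_nonneg (Real.log_nonneg (by push_cast; linarith)),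
      Real.norm_of_nonneg (by positivity)] at hlog
    have hlogb : Real.logb L ((m:ℝ)+1) ≤ (m:ℝ) + 1 := by
      rw [Real.logb, div_le_iff₀ (Real.log_pos hL)]
      linarith [hlog, mul_comm (Real.log L) ((m:ℝ)+1)]
    have hfin : (ωf n : ℝ) ≤ (m:ℝ) := by
      have := hωle n
      rw [← hmdef] at this
      have hm1' : (1:ℝ) ≤ (m:ℝ) := by exact_mod_cast hm1
      linarith
    exact_mod_cast hfin
  obtain ⟨N₀, hN₀⟩ := hN
  refine ⟨?_, ?_, ?_, ?_, ?_, ?_⟩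
  · -- monotonicity
    intro n k hn hω hk1 hkm
    have hc : ((k-1:ℕ):ℤ) = (k:ℤ) - 1 := by omega
    rw [hΩ k n, hΩ (k-1) n, hc]
    split
    · next h1 =>
      split
      · exact le_refl _
      · next h2 => exact zpow_le_zpow_right₀ hL.le (by omega)
    · next h1 =>
      split
      · next h2 => omega
      · exact zpow_le_zpow_right₀ hL.le (by omega)
  · -- Ω_{|n|} = 1
    intro n hn hω
    rw [hΩ]
    rw [if_neg (by omega)]
    simp
  · -- exact ratio on the cone
    refine ⟨N₀, fun k n hn hNm hcone hkm => ?_⟩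
    have hk1 : 1 ≤ k := by
      have := hN₀ n hNm
      omega
    exact hratio k n hk1 hkm hcone
  · -- cone limit
    intro ε hε
    refine ⟨N₀, fun k n hn hcone hkm hNm => ?_⟩
    have hk1 : 1 ≤ k := by
      have := hN₀ n hNm
      omega
    rw [hratio k n hk1 hkm hcone]
    simpa using hε
  · -- row sums dominate √(m+1)
    exact ⟨1, one_pos, fun n hn => by simpa using hsum n hn⟩
  · -- unbounded row sums
    intro M
    obtain ⟨m, hm⟩ : ∃ m : ℕ, M^2 ≤ (m:ℝ) := ⟨⌈M^2⌉₊, Nat.le_ceil _⟩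
    refine ⟨2 ^ m, Nat.one_le_two_pow, ?_⟩
    have hlog2 : Nat.log2 (2^m) = m := by
      rw [Nat.log2_eq_log_two, Nat.log_pow one_lt_two]
    rw [hlog2]
    have hM : M < Real.sqrt ((m:ℝ) + 1) := by
      rcases le_or_gt M 0 with hM0 | hM0
      · exact lt_of_le_of_lt hM0 (Real.sqrt_pos.mpr (by positivity))
      · rw [Real.lt_sqrt hM0.le]
        linarith
    have hss := hsum (2^m) Nat.one_le_two_pow
    rw [hlog2] at hss
    exact lt_of_lt_of_le hM hss

end
end

section
/- Let (a_k)_{k≥0} be a nondecreasing sequence of positive reals and set A_k := Σ_{j=0}^{k} a_j. If sup_{n≥0} A_n/a_n = ∞, then there exist a constant c ∈ (0,1), a strictly increasing sequence of indices (n_j)_{j≥1} with n_j → ∞, and integers γ_j with γ_j → ∞ and γ_j ≤ n_j, such that a_{n_j − γ_j} ≥ c·a_{n_j} for all j. -/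
open Filter

noncomputable section

private lemma statement14_key
    (a : ℕ → ℝ) (hpos : ∀ k, 0 < a k) (hmono : Monotone a)
    (hsup : ∀ M : ℝ, ∃ n : ℕ, M < (∑ j ∈ Finset.range (n + 1), a j) / a n) :
    ∀ G N : ℕ, ∃ n, N ≤ n ∧ G ≤ n ∧ a n / 2 ≤ a (n - G) := by
  intro G N
  rcases Nat.eq_zero_or_pos G with hG | hG
  · refine ⟨max N G, le_max_left _ _, le_max_right _ _, ?_⟩
    subst hG
    simp only [Nat.sub_zero]
    linarith [hpos (max N 0)]
  by_contra hcon
  push_neg at hcon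
  set N₁ := max N G with hN₁
  set C : ℝ := (N₁ : ℝ) + 2 * (G : ℝ) with hC
  have hCnonneg : (0:ℝ) ≤ C := by positivity
  have hbound : ∀ n, N₁ ≤ n → (∑ j ∈ Finset.range (n+1), a j) ≤ C * a n := by
    intro n
    induction n using Nat.strong_induction_on with
    | _ n ih =>
      intro hn
      by_cases hcase : N₁ + G ≤ n
      · have hGn : G ≤ n := le_trans (le_max_right N G) hn
        have h1 : n - G < n := Nat.sub_lt (by omega) hG
        have hIH := ih (n - G) h1 (by omega)
        have hsplit : (∑ j ∈ Finset.range (n - G + 1), a j)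
            + (∑ j ∈ Finset.Ico (n - G + 1) (n + 1), a j)
            = ∑ j ∈ Finset.range (n + 1), a j := by
          rw [Finset.range_eq_Ico, Finset.range_eq_Ico]
          exact Finset.sum_Ico_consecutive a (Nat.zero_le _) (by omega)
        have htail : (∑ j ∈ Finset.Ico (n - G + 1) (n + 1), a j) ≤ (G : ℝ) * a n := by
          calc (∑ j ∈ Finset.Ico (n - G + 1) (n + 1), a j)
              ≤ ∑ j ∈ Finset.Ico (n - G + 1) (n + 1), a n := by
                refine Finset.sum_le_sum fun j hj => hmono ?_
                exact Nat.lt_succ_iff.mp (Finset.mem_Ico.mp hj).2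
            _ = ((n + 1) - (n - G + 1) : ℕ) * a n := by
                rw [Finset.sum_const, Nat.card_Ico, nsmul_eq_mul]
            _ = (G : ℝ) * a n := by
                congr 2
                omega
        have hhalf : a (n - G) < a n / 2 := hcon n (le_trans (le_max_left N G) hn) hGn
        have hpn := hpos n
        have hIH2 : (∑ j ∈ Finset.range (n - G + 1), a j) ≤ C * (a n / 2) := by
          calc (∑ j ∈ Finset.range (n - G + 1), a j) ≤ C * a (n - G) := hIH
            _ ≤ C * (a n / 2) := by nlinarith
        have : (∑ j ∈ Finset.range (n + 1), a j) ≤ C * (a n / 2) + (G : ℝ) * a n := by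
          rw [← hsplit]; linarith
        have hCge : 2 * (G : ℝ) ≤ C := by
          have : (0:ℝ) ≤ (N₁:ℝ) := Nat.cast_nonneg _
          linarith
        nlinarith
      · have htriv : (∑ j ∈ Finset.range (n+1), a j) ≤ ((n+1 : ℕ) : ℝ) * a n := by
          calc (∑ j ∈ Finset.range (n+1), a j) ≤ ∑ _j ∈ Finset.range (n+1), a n := by
                refine Finset.sum_le_sum fun j hj => hmono ?_
                exact Nat.lt_succ_iff.mp (Finset.mem_range.mp hj)
            _ = ((n+1 : ℕ) : ℝ) * a n := by
                rw [Finset.sum_const, Finset.card_range, nsmul_eq_mul]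
        have hle : ((n+1 : ℕ) : ℝ) ≤ C := by
          have h3 : ((n+1:ℕ):ℝ) ≤ ((N₁ + 2*G : ℕ):ℝ) := by exact_mod_cast (by omega : n+1 ≤ N₁+2*G)
          rw [hC]; push_cast at h3 ⊢; linarith
        nlinarith [hpos n]
  obtain ⟨n, hn⟩ := hsup C
  have hn' : C * a n < ∑ j ∈ Finset.range (n + 1), a j :=
    (lt_div_iff₀ (hpos n)).mp hn
  by_cases h2 : N₁ ≤ n
  · linarith [hbound n h2]
  · have htriv : (∑ j ∈ Finset.range (n+1), a j) ≤ ((n+1 : ℕ) : ℝ) * a n := by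
      calc (∑ j ∈ Finset.range (n+1), a j) ≤ ∑ _j ∈ Finset.range (n+1), a n := by
            refine Finset.sum_le_sum fun j hj => hmono ?_
            exact Nat.lt_succ_iff.mp (Finset.mem_range.mp hj)
        _ = ((n+1 : ℕ) : ℝ) * a n := by
            rw [Finset.sum_const, Finset.card_range, nsmul_eq_mul]
    have : ((n+1 : ℕ) : ℝ) ≤ C := by
      rw [hC]
      have h3 : n + 1 ≤ N₁ := by omega
      have h4 : ((n+1:ℕ):ℝ) ≤ (N₁:ℝ) := by exact_mod_cast h3
      have hg : (0:ℝ) ≤ (G:ℝ) := Nat.cast_nonneg _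
      push_cast at h4 ⊢
      linarith
    nlinarith [hpos n]

private noncomputable def statement14_pick (P : ℕ → ℕ → Prop)
    (h : ∀ G N : ℕ, ∃ n, N ≤ n ∧ G ≤ n ∧ P G n) : ℕ → ℕ
  | 0 => (h 0 0).choose
  | j+1 => (h (j+1) (statement14_pick P h j + 1)).choose

/-- If `(a_k)` is a nondecreasing sequence of positive reals whose
partial-sum ratios `A_n/a_n` are unbounded, then there exist `c ∈ (0,1)`, a strictly
increasing sequence `n_j → ∞` and integers `γ_j → ∞` with `γ_j ≤ n_j` such that
`a_{n_j - γ_j} ≥ c·a_{n_j}` for all `j`. -/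
theorem statement14
    (a : ℕ → ℝ) (hpos : ∀ k, 0 < a k) (hmono : Monotone a)
    (hsup : ∀ M : ℝ, ∃ n : ℕ, M < (∑ j ∈ Finset.range (n + 1), a j) / a n) :
    ∃ c : ℝ, 0 < c ∧ c < 1 ∧ ∃ nseq γ : ℕ → ℕ,
      StrictMono nseq ∧
      Filter.Tendsto γ Filter.atTop Filter.atTop ∧
      (∀ j, γ j ≤ nseq j) ∧
      ∀ j, c * a (nseq j) ≤ a (nseq j - γ j) := by
  have hkey := statement14_key a hpos hmono hsup
  set P : ℕ → ℕ → Prop := fun G n => a n / 2 ≤ a (n - G) with hP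
  have hkey' : ∀ G N : ℕ, ∃ n, N ≤ n ∧ G ≤ n ∧ P G n := hkey
  set f : ℕ → ℕ := statement14_pick P hkey' with hf
  have hzero : 0 ≤ f 0 ∧ 0 ≤ f 0 ∧ P 0 (f 0) := (hkey' 0 0).choose_spec
  have hsucc : ∀ j, f j + 1 ≤ f (j+1) ∧ j + 1 ≤ f (j+1) ∧ P (j+1) (f (j+1)) :=
    fun j => (hkey' (j+1) (f j + 1)).choose_spec
  refine ⟨1/2, by norm_num, by norm_num, f, fun j => j, ?_, ?_, ?_, ?_⟩
  · exact strictMono_nat_of_lt_succ fun j => (hsucc j).1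
  · exact tendsto_id
  · intro j
    cases j with
    | zero => exact Nat.zero_le _
    | succ j => exact (hsucc j).2.1
  · intro j
    have hPj : P j (f j) := by
      cases j with
      | zero => exact hzero.2.2
      | succ j => exact (hsucc j).2.2
    rw [hP] at hPj
    linarith [hPj]

end
end
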